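/- arXiv:1705.10347 — 4 statements merged into one kernel-verified Lean document; each statement's English description precedes it below -/
import Mathlib

section
/- Suppose θ̂ is a real-valued statistic and θ₀ a fixed parameter, and suppose the conditional law of θ_ACC − θ̂ given the data equals the sampling law of θ̂ − θ given θ = θ₀, with common continuous strictly increasing CDF G. Define H_n(t) = P*(2θ̂ − θ_ACC ≤ t | data). Then H_n(θ₀) = 1 − G(θ̂ − θ₀), and as a function of the random sample, H_n(θ₀) is uniformly distributed on (0,1); hence H_n is a confidence distribution for θ. -/
open MeasureTheory Filter Set

lemma cdf_lt_of_cdf_le {α : Type*} [MeasurableSpace α] (μ : Measure α)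
    (f : α → ℝ) (G : ℝ → ℝ) (hGcont : Continuous G)
    (h : ∀ t, μ {a | f a ≤ t} = ENNReal.ofReal (G t)) (t : ℝ) :
    μ {a | f a < t} = ENNReal.ofReal (G t) := by
  have hset : {a | f a < t} = ⋃ n : ℕ, {a | f a ≤ t - 1 / (n + 1)} := by
    ext a
    simp only [mem_setOf_eq, mem_iUnion]
    constructor
    · intro ha
      obtain ⟨n, hn⟩ := exists_nat_one_div_lt (sub_pos.mpr ha)
      exact ⟨n, by linarith⟩
    · rintro ⟨n, hn⟩
      have : (0:ℝ) < 1 / (n + 1) := by positivity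
      linarith
  have hmono : Monotone (fun n : ℕ => {a | f a ≤ t - 1 / (n + 1)}) := by
    intro m n hmn a ha
    have h1 : (1:ℝ) / (n + 1) ≤ 1 / (m + 1) := by
      apply one_div_le_one_div_of_le (by positivity)
      exact_mod_cast by omega
    simp only [mem_setOf_eq] at ha ⊢
    linarith
  have htend1 : Tendsto (fun n : ℕ => μ {a | f a ≤ t - 1 / (n + 1)}) atTop
      (nhds (μ (⋃ n : ℕ, {a | f a ≤ t - 1 / (n + 1)}))) :=
    tendsto_measure_iUnion_atTop hmono
  have htend2 : Tendsto (fun n : ℕ => μ {a | f a ≤ t - 1 / (n + 1)}) atTop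
      (nhds (ENNReal.ofReal (G t))) := by
    simp only [h]
    apply (ENNReal.continuous_ofReal.tendsto _).comp
    apply (hGcont.tendsto _).comp
    have : Tendsto (fun n : ℕ => 1 / ((n:ℝ) + 1)) atTop (nhds 0) :=
      tendsto_one_div_add_atTop_nhds_zero_nat
    simpa using (tendsto_const_nhds.sub this)
  rw [hset]
  exact tendsto_nhds_unique htend1 htend2

/-- Remark 1 (first part). Under the matching condition
`(θ_ACC − θ̂) | S_n = s_obs ∼ (θ̂ − θ) | θ = θ₀` with common continuous strictly
increasing CDF `G`, the function `H_n(t) = P*(2θ̂ − θ_ACC ≤ t | data)` satisfies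
`H_n(θ₀) = 1 − G(θ̂ − θ₀)`, and as a function of the random sample `H_n(θ₀)` is
uniformly distributed on `(0,1)`; hence `H_n` is a confidence distribution. -/
theorem remark1_confidence_distribution
    {Ω : Type*} [MeasurableSpace Ω] (P : Measure Ω) [IsProbabilityMeasure P]
    -- sampling side: `θhat` is the estimator, `θ₀` the true parameter
    (θhat : Ω → ℝ) (hθhat : Measurable θhat) (θ₀ : ℝ)
    -- Monte-Carlo side: `κ x` is the conditional law of `θ_ACC` given `θ̂ = x`
    (κ : ℝ → Measure ℝ) (hκ : ∀ x, IsProbabilityMeasure (κ x))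
    (G : ℝ → ℝ) (hGcont : Continuous G) (hGmono : StrictMono G)
    (hG0 : Tendsto G atBot (nhds 0)) (hG1 : Tendsto G atTop (nhds 1))
    -- matching condition: the Monte-Carlo law of `θ_ACC − θ̂` and the sampling law
    -- of `θ̂ − θ` given `θ = θ₀` have the same CDF `G`
    (hMC : ∀ x t : ℝ, κ x {y | y - x ≤ t} = ENNReal.ofReal (G t))
    (hSamp : ∀ t : ℝ, P {ω | θhat ω - θ₀ ≤ t} = ENNReal.ofReal (G t))
    -- definition of `H_n` (as a function of the data value `x = θ̂`)
    (Hn : ℝ → ℝ → ℝ)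
    (hHn : ∀ x t : ℝ, Hn x t = (κ x {y | 2 * x - y ≤ t}).toReal) :
    (∀ x : ℝ, Hn x θ₀ = 1 - G (x - θ₀)) ∧
      (∀ t ∈ Ioo (0 : ℝ) 1, P {ω | Hn (θhat ω) θ₀ ≤ t} = ENNReal.ofReal t) := by

  -- bounds on G
  have hGle1 : ∀ x, G x ≤ 1 := fun x => hGmono.monotone.ge_of_tendsto hG1 x
  have hG0le : ∀ x, 0 ≤ G x := fun x => hGmono.monotone.le_of_tendsto hG0 x
  -- first part
  have part1 : ∀ x : ℝ, Hn x θ₀ = 1 - G (x - θ₀) := by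
    intro x
    have hcompl : {y : ℝ | 2 * x - y ≤ θ₀} = {y : ℝ | y - x < x - θ₀}ᶜ := by
      ext y; simp only [mem_setOf_eq, mem_compl_iff, not_lt]; constructor <;> intro <;> linarith
    have hlt : κ x {y : ℝ | y - x < x - θ₀} = ENNReal.ofReal (G (x - θ₀)) :=
      cdf_lt_of_cdf_le (κ x) (fun y => y - x) G hGcont (hMC x) _
    have hmeas : MeasurableSet {y : ℝ | y - x < x - θ₀} :=
      measurableSet_lt (measurable_id.sub measurable_const) measurable_const
    have := hκ x
    rw [hHn, hcompl, measure_compl hmeas (measure_ne_top _ _), measure_univ, hlt]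
    rw [← ENNReal.ofReal_one, ← ENNReal.ofReal_sub _ (hG0le _)]
    rw [ENNReal.toReal_ofReal (by linarith [hGle1 (x - θ₀)])]
  refine ⟨part1, ?_⟩
  -- second part
  intro t ht
  obtain ⟨ht0, ht1⟩ := ht
  -- find c with G c = 1 - t
  have h1t : 0 < 1 - t := by linarith
  have h1t' : 1 - t < 1 := by linarith
  obtain ⟨a, ha⟩ : ∃ a, G a < 1 - t := (hG0.eventually (eventually_lt_nhds h1t)).exists
  obtain ⟨b, hb⟩ : ∃ b, 1 - t < G b := (hG1.eventually (eventually_gt_nhds h1t')).exists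
  have hab : a ≤ b := le_of_lt (hGmono.lt_iff_lt.mp (lt_trans ha hb))
  obtain ⟨c, _, hc⟩ := intermediate_value_Icc hab hGcont.continuousOn
    ⟨le_of_lt ha, le_of_lt hb⟩
  -- rewrite the set
  have hseteq : {ω | Hn (θhat ω) θ₀ ≤ t} = {ω | θhat ω - θ₀ < c}ᶜ := by
    ext ω
    simp only [mem_setOf_eq, mem_compl_iff, not_lt, part1 (θhat ω)]
    rw [show (1 - G (θhat ω - θ₀) ≤ t) ↔ (1 - t ≤ G (θhat ω - θ₀)) by
      constructor <;> intro <;> linarith]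
    rw [← hc, hGmono.le_iff_le]
  have hlt : P {ω | θhat ω - θ₀ < c} = ENNReal.ofReal (G c) :=
    cdf_lt_of_cdf_le P (fun ω => θhat ω - θ₀) G hGcont hSamp c
  have hmeas : MeasurableSet {ω | θhat ω - θ₀ < c} :=
    measurableSet_lt (hθhat.sub measurable_const) measurable_const
  rw [hseteq, measure_compl hmeas (measure_ne_top _ _), measure_univ, hlt, hc,
    ← ENNReal.ofReal_one, ← ENNReal.ofReal_sub _ (by linarith)]
  norm_num
end

section
/- Let μ̂ be a real random variable with density g₁(μ̂ − μ) for a location parameter μ (g₁ a fixed probability density on ℝ). In the accept–reject scheme with flat proposal r_n(μ) ∝ 1, the accepted pair (μ', s') has joint density proportional to g₁(s' − μ') K_ε(s' − μ̂_obs); then the conditional density of T = s' − μ' given acceptance is exactly g₁(t), i.e., P*(μ_ACC − μ̂ ≤ u | μ̂_obs) = P(μ̂ − μ ≤ u | μ = μ₀) for all u. -/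
open MeasureTheory Set

/-- The shear `(a, b) ↦ (a - b, a)` as a measurable equivalence of `ℝ × ℝ`. -/
def shearEquiv : (ℝ × ℝ) ≃ᵐ (ℝ × ℝ) where
  toFun p := (p.1 - p.2, p.1)
  invFun p := (p.2, p.2 - p.1)
  left_inv p := by simp
  right_inv p := by simp
  measurable_toFun := (measurable_fst.sub measurable_snd).prodMk measurable_fst
  measurable_invFun := measurable_snd.prodMk (measurable_snd.sub measurable_fst)

lemma shearEquiv_measurePreserving :
    MeasurePreserving shearEquiv
      ((volume : Measure ℝ).prod volume) ((volume : Measure ℝ).prod volume) := by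
  have h1 : MeasurePreserving (fun p : ℝ × ℝ => (p.1, -p.2))
      ((volume : Measure ℝ).prod volume) ((volume : Measure ℝ).prod volume) :=
    (MeasurePreserving.id volume).prod (Measure.measurePreserving_neg volume)
  have h2 := measurePreserving_prod_add_right (volume : Measure ℝ) (volume : Measure ℝ)
  have h3 := Measure.measurePreserving_swap (μ := (volume : Measure ℝ)) (ν := (volume : Measure ℝ))
  have h := (h3.comp h2).comp h1
  have heq : ((fun z : ℝ × ℝ => (z.1, z.2 + z.1)) ∘ fun p : ℝ × ℝ => (p.1, -p.2)) =
      fun p : ℝ × ℝ => (p.1, p.1 - p.2) := by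
    funext p; simp [neg_add_eq_sub]
  have heq2 : (Prod.swap ∘ fun p : ℝ × ℝ => (p.1, p.1 - p.2)) =
      (shearEquiv : ℝ × ℝ → ℝ × ℝ) := by
    funext p; rfl
  rw [Function.comp_assoc, heq, heq2] at h
  exact h

/-- Key computation: the shear substitution turns the joint density into a product. -/
lemma key_integral (h K : ℝ → ℝ) (mobs : ℝ) :
    (∫ q : ℝ × ℝ, h (q.2 - q.1) * K (q.2 - mobs)) = (∫ t, h t) * (∫ t, K t) := by
  have := shearEquiv_measurePreserving.integral_comp shearEquiv.measurableEmbedding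
    (fun q : ℝ × ℝ => h (q.2 - q.1) * K (q.2 - mobs))
  rw [Measure.volume_eq_prod, ← this]
  have : ∀ p : ℝ × ℝ, h ((shearEquiv p).2 - (shearEquiv p).1) * K ((shearEquiv p).2 - mobs)
      = K (p.1 - mobs) * h p.2 := by
    intro p
    have : (shearEquiv p).2 - (shearEquiv p).1 = p.2 := by
      show p.1 - (p.1 - p.2) = p.2; ring
    rw [this]
    show h p.2 * K (p.1 - mobs) = _
    ring
  simp_rw [this]
  rw [integral_prod_mul (f := fun x => K (x - mobs)) (g := h), integral_sub_right_eq_self K mobs, mul_comm]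

/-- Corollary 1, Part 1 (location family): with flat proposal `r_n(μ) ∝ 1`, the accepted
pair `(μ', s')` has joint density proportional to `g₁(s' − μ') K(s' − μ̂_obs)`, and the
conditional law of `T = s' − μ'` given acceptance has density exactly `g₁`: for every `u`,
the (unnormalized) acceptance mass of the event `{s' − μ' ≤ u}` equals `∫_{t ≤ u} g₁`
times the total acceptance mass (which is `1`).  Hence
`P*(μ_ACC − μ̂ ≤ u | μ̂_obs) = P(μ̂ − μ ≤ u | μ = μ₀)`. -/
theorem location_family_exact_matching
    (g₁ K : ℝ → ℝ)
    (hg₁_meas : Measurable g₁) (hg₁_nonneg : ∀ t, 0 ≤ g₁ t) (hg₁_int : ∫ t, g₁ t = 1)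
    (hg₁_integrable : Integrable g₁)
    (hK_meas : Measurable K) (hK_nonneg : ∀ t, 0 ≤ K t) (hK_int : ∫ t, K t = 1)
    (hK_integrable : Integrable K)
    (mobs : ℝ) :
    -- total acceptance mass is 1, and the law of `T = s' − μ'` is `g₁`
    ((∫ q : ℝ × ℝ, g₁ (q.2 - q.1) * K (q.2 - mobs)) = 1) ∧
      ∀ u : ℝ,
        (∫ q : ℝ × ℝ,
            ({q : ℝ × ℝ | q.2 - q.1 ≤ u}).indicator
              (fun q => g₁ (q.2 - q.1) * K (q.2 - mobs)) q)
          = ∫ t in Iic u, g₁ t := by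
  constructor
  · rw [key_integral, hg₁_int, hK_int, one_mul]
  · intro u
    have hind : ∀ q : ℝ × ℝ,
        ({q : ℝ × ℝ | q.2 - q.1 ≤ u}).indicator
          (fun q => g₁ (q.2 - q.1) * K (q.2 - mobs)) q
        = (Iic u).indicator g₁ (q.2 - q.1) * K (q.2 - mobs) := by
      intro q
      by_cases hq : q.2 - q.1 ≤ u
      · rw [indicator_of_mem (by exact hq), indicator_of_mem (by exact hq)]
      · rw [indicator_of_notMem (by exact hq), indicator_of_notMem (by exact hq), zero_mul]
    calc (∫ q : ℝ × ℝ,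
            ({q : ℝ × ℝ | q.2 - q.1 ≤ u}).indicator
              (fun q => g₁ (q.2 - q.1) * K (q.2 - mobs)) q)
        = ∫ q : ℝ × ℝ, (Iic u).indicator g₁ (q.2 - q.1) * K (q.2 - mobs) := by
          simp_rw [hind]
      _ = (∫ t, (Iic u).indicator g₁ t) * (∫ t, K t) := key_integral _ _ _
      _ = ∫ t in Iic u, g₁ t := by rw [hK_int, mul_one, integral_indicator measurableSet_Iic]
end

section
/- Let σ̂ be a positive random variable with density (1/σ) g₂(σ̂/σ) for a scale parameter σ > 0 (g₂ a fixed probability density on (0,∞)). With proposal r_n(σ) ∝ 1/σ on (0,∞), for the pivot T(σ, s) = s/σ with s_{t,σ} = tσ, the integral ∫₀^∞ (1/σ) K_ε(tσ − s_obs) dσ equals ∫ (1/(u + s_obs)) K_ε(u) du, which is independent of t; consequently the conditional law of σ_ACC/σ̂ given σ̂_obs equals the sampling law of σ̂/σ given σ = σ₀. -/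
/-!
The measure `dσ / σ` on `(0, ∞)` is invariant under `σ ↦ tσ`, so the normalising integral does
not depend on `t`; the shift `u = σ - s_obs` puts it in the stated form.

For the second part integrate out `σ` first. For fixed `s > 0` the substitution `w = s / σ` turns
`∫ σ⁻² g₂(s/σ) 1_W(s/σ) dσ` into `s⁻¹ ∫_{(0,∞) ∩ W} g₂`, and for `s ≤ 0` the slice vanishes since
`g₂` lives on `(0, ∞)`. Hence the joint integral over `{σ > 0, s/σ ∈ W}` factorises as
`(∫_{(0,∞) ∩ W} g₂) · C` with `C` independent of `W`; comparing `W = (-∞, v]` with `W = ℝ`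
gives the claim.
-/

open MeasureTheory Set ENNReal

section Substitution

variable {E : Type*} [NormedAddCommGroup E] [NormedSpace ℝ E]

theorem integral_Ioi_inv_smul_comp_mul_left (f : ℝ → E) {t : ℝ} (ht : 0 < t) :
    ∫ x in Ioi 0, x⁻¹ • f (t * x) = ∫ x in Ioi 0, x⁻¹ • f x := by
  have hscale : ∀ x : ℝ, x⁻¹ • f (t * x) = t • ((t * x)⁻¹ • f (t * x)) := by
    intro x
    rw [smul_smul, mul_inv, ← mul_assoc, mul_inv_cancel₀ ht.ne', one_mul]
  simp_rw [hscale, integral_smul, integral_comp_mul_left_Ioi (fun y => y⁻¹ • f y) 0 ht,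
    mul_zero, smul_inv_smul₀ ht.ne']

theorem integral_Ioi_comp_add_right (f : ℝ → E) (b c : ℝ) :
    ∫ u in Ioi (b - c), f (u + c) = ∫ x in Ioi b, f x := by
  rw [← preimage_add_const_Ioi]
  exact (measurePreserving_add_right volume c).setIntegral_preimage_emb
    (measurableEmbedding_addRight c) f _

end Substitution

theorem integral_Ioi_inv_mul_comp_mul_sub (K : ℝ → ℝ) (c : ℝ) {t : ℝ} (ht : 0 < t) :
    ∫ σ in Ioi 0, σ⁻¹ * K (t * σ - c) = ∫ u in Ioi (-c), (u + c)⁻¹ * K u := by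
  have hscale := integral_Ioi_inv_smul_comp_mul_left (fun x => K (x - c)) ht
  simp only [smul_eq_mul] at hscale
  rw [hscale, ← integral_Ioi_comp_add_right _ 0 c, zero_sub]
  simp_rw [add_sub_cancel_right]

theorem lintegral_Ioi_inv_mul_inv_mul_comp_div (g : ℝ → ℝ≥0∞) {c : ℝ} (hc : 0 < c) :
    ∫⁻ σ in Ioi 0, ENNReal.ofReal (σ⁻¹ * σ⁻¹) * g (c / σ)
      = ENNReal.ofReal c⁻¹ * ∫⁻ w in Ioi 0, g w := by
  have himage : (c / ·) '' Ioi (0 : ℝ) = Ioi 0 := by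
    refine (image_subset_iff.2 fun σ hσ => div_pos hc hσ).antisymm fun w hw => ?_
    exact ⟨c / w, div_pos hc hw, div_div_cancel₀ hc.ne'⟩
  have hderiv : ∀ σ ∈ Ioi (0 : ℝ),
      HasDerivWithinAt (c / ·) (-(c * (σ⁻¹ * σ⁻¹))) (Ioi 0) σ := by
    intro σ hσ
    simpa [div_eq_mul_inv, mul_assoc, pow_two] using
      ((hasDerivAt_inv (ne_of_gt hσ)).const_mul c).hasDerivWithinAt
  have hinj : InjOn (c / ·) (Ioi (0 : ℝ)) := fun x _ y _ h => by
    simpa only [div_div_cancel₀ hc.ne'] using congrArg (c / ·) h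
  conv_rhs => rw [← himage, lintegral_image_eq_lintegral_abs_deriv_mul measurableSet_Ioi hderiv
    hinj, ← lintegral_const_mul' _ _ ofReal_ne_top]
  refine setLIntegral_congr_fun measurableSet_Ioi fun σ hσ => ?_
  rw [abs_neg, abs_of_pos (by have := mem_Ioi.1 hσ; positivity), ← mul_assoc,
    ← ENNReal.ofReal_mul (inv_nonneg.2 hc.le), inv_mul_cancel_left₀ hc.ne']

theorem lintegral_Ioi_inv_mul_inv_mul_indicator_comp_div {g : ℝ → ℝ≥0∞}
    (hg : ∀ x ≤ 0, g x = 0) {W : Set ℝ} (hW : MeasurableSet W) (s : ℝ) :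
    ∫⁻ σ in Ioi 0, ENNReal.ofReal (σ⁻¹ * σ⁻¹) * W.indicator g (s / σ)
      = ENNReal.ofReal s⁻¹ * ∫⁻ w in Ioi 0 ∩ W, g w := by
  rcases lt_or_ge 0 s with hs | hs
  · rw [lintegral_Ioi_inv_mul_inv_mul_comp_div _ hs, lintegral_indicator hW,
      Measure.restrict_restrict hW, inter_comm]
  · have hzero : ∀ σ ∈ Ioi (0 : ℝ), W.indicator g (s / σ) = 0 := fun σ hσ =>
      indicator_apply_eq_zero.2 fun _ => hg _ (div_nonpos_of_nonpos_of_nonneg hs (le_of_lt hσ))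
    rw [setLIntegral_congr_fun measurableSet_Ioi fun σ hσ => by rw [hzero σ hσ, mul_zero],
      lintegral_zero, ENNReal.ofReal_of_nonpos (inv_nonpos.2 hs), zero_mul]

theorem measurableSet_ratio_mem {W : Set ℝ} (hW : MeasurableSet W) :
    MeasurableSet {q : ℝ × ℝ | 0 < q.1 ∧ q.2 / q.1 ∈ W} :=
  (measurableSet_lt measurable_const measurable_fst).inter ((measurable_snd.div measurable_fst) hW)

theorem lintegral_indicator_ratio_mem {g h : ℝ → ℝ≥0∞} (hg_meas : Measurable g)
    (hh_meas : Measurable h) (hg : ∀ x ≤ 0, g x = 0) {W : Set ℝ} (hW : MeasurableSet W) :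
    ∫⁻ q : ℝ × ℝ, {q : ℝ × ℝ | 0 < q.1 ∧ q.2 / q.1 ∈ W}.indicator
        (fun q => ENNReal.ofReal (q.1⁻¹ * q.1⁻¹) * g (q.2 / q.1) * h q.2) q
      = (∫⁻ s, ENNReal.ofReal s⁻¹ * h s) * ∫⁻ w in Ioi 0 ∩ W, g w := by
  have hslice : ∀ σ s : ℝ, {q : ℝ × ℝ | 0 < q.1 ∧ q.2 / q.1 ∈ W}.indicator
      (fun q => ENNReal.ofReal (q.1⁻¹ * q.1⁻¹) * g (q.2 / q.1) * h q.2) (σ, s)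
      = (Ioi 0).indicator (fun σ => ENNReal.ofReal (σ⁻¹ * σ⁻¹) * W.indicator g (s / σ)) σ
          * h s := by
    intro σ s
    by_cases hσ : 0 < σ <;> by_cases hw : s / σ ∈ W <;> simp [indicator, hσ, hw]
  rw [Measure.volume_eq_prod, lintegral_prod_symm' _
    ((Measurable.indicator (by fun_prop) (measurableSet_ratio_mem hW)))]
  simp_rw [hslice]
  calc ∫⁻ s, ∫⁻ σ, (Ioi 0).indicator
          (fun σ => ENNReal.ofReal (σ⁻¹ * σ⁻¹) * W.indicator g (s / σ)) σ * h s
      = ∫⁻ s, ENNReal.ofReal s⁻¹ * h s * ∫⁻ w in Ioi 0 ∩ W, g w := by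
        refine lintegral_congr fun s => ?_
        rw [lintegral_mul_const _ (by measurability), lintegral_indicator measurableSet_Ioi,
          lintegral_Ioi_inv_mul_inv_mul_indicator_comp_div hg hW, mul_right_comm]
    _ = (∫⁻ s, ENNReal.ofReal s⁻¹ * h s) * ∫⁻ w in Ioi 0 ∩ W, g w :=
        lintegral_mul_const _ (by fun_prop)

theorem integral_indicator_ratio_mem {g h : ℝ → ℝ} (hg_meas : Measurable g)
    (hh_meas : Measurable h) (hg_nonneg : ∀ x, 0 ≤ g x) (hg : ∀ x ≤ 0, g x = 0)
    (hh_nonneg : ∀ x, 0 ≤ h x) {W : Set ℝ} (hW : MeasurableSet W) :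
    ∫ q : ℝ × ℝ, {q : ℝ × ℝ | 0 < q.1 ∧ q.2 / q.1 ∈ W}.indicator
        (fun q => q.1⁻¹ * (q.1⁻¹ * g (q.2 / q.1)) * h q.2) q
      = (∫ w in Ioi 0 ∩ W, g w) *
          (∫⁻ s, ENNReal.ofReal s⁻¹ * ENNReal.ofReal (h s)).toReal := by
  have hofReal : ∀ q : ℝ × ℝ, ENNReal.ofReal (q.1⁻¹ * (q.1⁻¹ * g (q.2 / q.1)) * h q.2)
      = ENNReal.ofReal (q.1⁻¹ * q.1⁻¹) * ENNReal.ofReal (g (q.2 / q.1))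
          * ENNReal.ofReal (h q.2) := fun q => by
    rw [← mul_assoc, ENNReal.ofReal_mul (mul_nonneg (mul_self_nonneg _) (hg_nonneg _)),
      ENNReal.ofReal_mul (mul_self_nonneg _)]
  have hnonneg : ∀ q : ℝ × ℝ, 0 ≤ q.1⁻¹ * (q.1⁻¹ * g (q.2 / q.1)) * h q.2 := fun q => by
    rw [← mul_assoc]
    exact mul_nonneg (mul_nonneg (mul_self_nonneg _) (hg_nonneg _)) (hh_nonneg _)
  rw [integral_eq_lintegral_of_nonneg_ae (ae_of_all _ (indicator_nonneg fun q _ => hnonneg q))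
      ((Measurable.indicator (by fun_prop) (measurableSet_ratio_mem hW)).aestronglyMeasurable),
    integral_eq_lintegral_of_nonneg_ae (ae_of_all _ hg_nonneg) hg_meas.aestronglyMeasurable,
    mul_comm, ← ENNReal.toReal_mul, ← Function.comp_def ENNReal.ofReal, ← indicator_comp_of_zero ENNReal.ofReal_zero]
  simp_rw [Function.comp_def, hofReal]
  exact congrArg _ (lintegral_indicator_ratio_mem hg_meas.ennreal_ofReal
    hh_meas.ennreal_ofReal (fun x hx => by rw [hg x hx, ENNReal.ofReal_zero]) hW)

theorem scale_family_exact_matching_general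
    (g₂ K : ℝ → ℝ)
    (hg₂_meas : Measurable g₂) (hg₂_nonneg : ∀ t, 0 ≤ g₂ t)
    (hg₂_supp : ∀ t ≤ (0 : ℝ), g₂ t = 0) (hg₂_int : ∫ t in Ioi (0 : ℝ), g₂ t = 1)
    (hK_meas : Measurable K) (hK_nonneg : ∀ t, 0 ≤ K t)
    (sobs : ℝ) :
    -- (a) the normalizing integral is free of `t`
    (∀ t : ℝ, 0 < t →
      (∫ σ in Ioi (0 : ℝ), σ⁻¹ * K (t * σ - sobs))
        = ∫ u in Ioi (-sobs), (u + sobs)⁻¹ * K u) ∧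
    -- (b) the conditional law of `σ_ACC/σ̂` equals the sampling law of `σ̂/σ`
    (∀ v : ℝ, 0 < v →
      (∫ q : ℝ × ℝ,
          ({q : ℝ × ℝ | 0 < q.1 ∧ q.2 / q.1 ≤ v}).indicator
            (fun q => q.1⁻¹ * (q.1⁻¹ * g₂ (q.2 / q.1)) * K (q.2 - sobs)) q)
        = (∫ w in Ioc (0 : ℝ) v, g₂ w) *
            ∫ q : ℝ × ℝ,
              ({q : ℝ × ℝ | 0 < q.1}).indicator
                (fun q => q.1⁻¹ * (q.1⁻¹ * g₂ (q.2 / q.1)) * K (q.2 - sobs)) q) := by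
  refine ⟨fun t ht => integral_Ioi_inv_mul_comp_mul_sub K sobs ht, fun v _ => ?_⟩
  have hfactor {W : Set ℝ} (hW : MeasurableSet W) :=
    integral_indicator_ratio_mem (h := fun s => K (s - sobs)) hg₂_meas
      (hK_meas.comp (measurable_sub_const sobs)) hg₂_nonneg hg₂_supp (fun _ => hK_nonneg _) hW
  have hall : {q : ℝ × ℝ | 0 < q.1} = {q : ℝ × ℝ | 0 < q.1 ∧ q.2 / q.1 ∈ univ} := by simp
  rw [hall, hfactor MeasurableSet.univ, inter_univ, hg₂_int, one_mul, ← Ioi_inter_Iic]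
  exact hfactor measurableSet_Iic

/-- Corollary 1, Part 2 (scale family): with proposal `r_n(σ) ∝ 1/σ` on `(0,∞)` and the
pivot `T(σ,s) = s/σ` (so `s_{t,σ} = tσ`), the normalizing integral
`∫₀^∞ (1/σ) K(tσ − s_obs) dσ = ∫_{u > −s_obs} K(u)/(u + s_obs) du` is independent of
`t > 0`; consequently the conditional Monte-Carlo law of `σ_ACC/σ̂` given `σ̂_obs`
equals the sampling law of `σ̂/σ` given `σ = σ₀`. -/
theorem scale_family_exact_matching
    (g₂ K : ℝ → ℝ)
    (hg₂_meas : Measurable g₂) (hg₂_nonneg : ∀ t, 0 ≤ g₂ t)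
    (hg₂_supp : ∀ t ≤ (0 : ℝ), g₂ t = 0) (hg₂_int : ∫ t in Ioi (0 : ℝ), g₂ t = 1)
    (hg₂_integrable : Integrable g₂)
    (hK_meas : Measurable K) (hK_nonneg : ∀ t, 0 ≤ K t) (hK_int : ∫ t, K t = 1)
    (hK_integrable : Integrable K)
    (sobs : ℝ) (hsobs : 0 < sobs) :
    -- (a) the normalizing integral is free of `t`
    (∀ t : ℝ, 0 < t →
      (∫ σ in Ioi (0 : ℝ), σ⁻¹ * K (t * σ - sobs))
        = ∫ u in Ioi (-sobs), (u + sobs)⁻¹ * K u) ∧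
    -- (b) the conditional law of `σ_ACC/σ̂` equals the sampling law of `σ̂/σ`
    (∀ v : ℝ, 0 < v →
      (∫ q : ℝ × ℝ,
          ({q : ℝ × ℝ | 0 < q.1 ∧ q.2 / q.1 ≤ v}).indicator
            (fun q => q.1⁻¹ * (q.1⁻¹ * g₂ (q.2 / q.1)) * K (q.2 - sobs)) q)
        = (∫ w in Ioc (0 : ℝ) v, g₂ w) *
            ∫ q : ℝ × ℝ,
              ({q : ℝ × ℝ | 0 < q.1}).indicator
                (fun q => q.1⁻¹ * (q.1⁻¹ * g₂ (q.2 / q.1)) * K (q.2 - sobs)) q) :=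
  scale_family_exact_matching_general g₂ K hg₂_meas hg₂_nonneg hg₂_supp hg₂_int hK_meas hK_nonneg
    sobs
end

section
/- Let T : Θ × S → ℝ^d be a pivot: the sampling density of T(θ, S_n) given θ = θ₀ is g(t), free of θ. Suppose the accept–reject joint density of (θ', s') is proportional to r_n(θ') f_n(s'|θ') K_ε(s' − s_obs), the map s ↦ T(θ, s) is a diffeomorphism for each θ with inverse s_{t,θ} and Jacobian factor satisfying f_n(s_{t,θ}|θ)|∂_s T(θ, s_{t,θ})|^{-1} = g(t), and ∫ r_n(θ) K_ε(s_{t,θ} − s_obs) dθ = C for a constant C free of t. Then the conditional density of T(θ_ACC, s') given acceptance is exactly g(t), so the Monte-Carlo law of T(θ_ACC, S_n) given S_n = s_obs equals the sampling law of T(θ, S_n) given θ = θ₀. -/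
/-!
Integrate first over `s'` for fixed `θ'` (Tonelli). The substitution `s' = s_{t,θ'}` together with
the pivot relation `f_n(s_{t,θ'}|θ') |∂ₛT|⁻¹ = g(t)` turns this inner integral into
`∫_A g(t) r_n(θ') K_ε(s_{t,θ'} − s_obs) dt`; swapping the order of integration, the remaining
`θ'`-integral is the constant `C`.

Since the change of variables and the normalizing constant are only given as Bochner integrals,
which vanish on non-integrable functions, the computation is carried out with lower integrals:
`hCOV` is upgraded to an identity of lower integrals, and the normalizer's lower integral is
`ofReal C`, or possibly `⊤` when `C = 0`; both cases give the claimed value.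
-/

open MeasureTheory Set

theorem MeasureTheory.exists_integrable_pos_of_sigmaFinite {α : Type*} [MeasurableSpace α]
    (μ : Measure α) [SigmaFinite μ] :
    ∃ w : α → ℝ, Measurable w ∧ Integrable w μ ∧ ∀ x, 0 < w x := by
  obtain ⟨w, hw_pos, hw_meas, hw_int⟩ := exists_pos_lintegral_lt_of_sigmaFinite μ one_ne_zero
  refine ⟨fun x => w x, hw_meas.coe_nnreal_real,
    ⟨hw_meas.coe_nnreal_real.aestronglyMeasurable, ?_⟩, fun x => hw_pos x⟩
  simpa [HasFiniteIntegral] using hw_int.trans ENNReal.one_lt_top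

theorem ENNReal.iSup_ofReal_min_nat_mul {a b : ℝ} (hb : 0 < b) :
    ⨆ n : ℕ, ENNReal.ofReal (min a (n * b)) = ENNReal.ofReal a := by
  refine le_antisymm (iSup_le fun n => ENNReal.ofReal_le_ofReal (min_le_left _ _)) ?_
  obtain ⟨n, hn⟩ := exists_nat_ge (a / b)
  refine le_iSup_of_le n (ENNReal.ofReal_le_ofReal (le_min le_rfl ?_))
  rwa [div_le_iff₀ hb] at hn

namespace MeasureTheory

theorem toReal_lintegral_mul_of_toReal_eq {α : Type*} [MeasurableSpace α] {μ : Measure α}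
    {f H : α → ENNReal} {C : ℝ} (hC : 0 ≤ C) (hH : ∀ t, (H t).toReal = C) :
    (∫⁻ t, f t * H t ∂μ).toReal = C * (∫⁻ t, f t ∂μ).toReal := by
  rcases hC.eq_or_lt with rfl | hC
  · -- `f * H` only takes the values `0` and `⊤`, hence so does its integral
    have htop : ∀ t, ⊤ * (f t * H t) = f t * H t := fun t => by
      rcases (ENNReal.toReal_eq_zero_iff _).1 (hH t) with h | h <;>
        simp [h, ← mul_assoc, mul_comm _ ⊤]
    have hle : ⊤ * ∫⁻ t, f t * H t ∂μ ≤ ∫⁻ t, f t * H t ∂μ :=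
      (lintegral_const_mul_le _ _).trans_eq (lintegral_congr htop)
    rcases eq_or_ne (∫⁻ t, f t * H t ∂μ) 0 with h0 | h0
    · simp [h0]
    · simp [top_le_iff.1 ((ENNReal.top_mul h0).symm.trans_le hle)]
  · have hHC : ∀ t, H t = ENNReal.ofReal C := fun t => by
      rw [← hH t, ENNReal.ofReal_toReal]
      exact (ENNReal.toReal_ne_zero.1 ((hH t).trans_ne hC.ne')).2
    simp_rw [hHC, lintegral_mul_const' _ _ ENNReal.ofReal_ne_top, ENNReal.toReal_mul,
      ENNReal.toReal_ofReal hC.le, mul_comm]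

section ChangeOfVariables

variable {α β : Type*} [MeasurableSpace α] [MeasurableSpace β] {μ : Measure α} [SigmaFinite μ]
  [NeZero μ] {ν : Measure β} {σ : β → α} {J : β → ℝ}

theorem lintegral_ofReal_eq_of_integrable_of_integral_eq (hJ : ∀ t, 0 ≤ J t)
    (hcov : ∀ h : α → ℝ, Measurable h → (∀ x, 0 ≤ h x) → ∫ x, h x ∂μ = ∫ t, h (σ t) * J t ∂ν)
    {h : α → ℝ} (hh : Measurable h) (hh0 : ∀ x, 0 ≤ h x) (hhi : Integrable h μ) :
    ∫⁻ x, ENNReal.ofReal (h x) ∂μ = ∫⁻ t, ENNReal.ofReal (h (σ t) * J t) ∂ν := by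
  obtain ⟨w, hw_meas, hw_int, hw_pos⟩ := exists_integrable_pos_of_sigmaFinite μ
  have hw0 : ∀ x, 0 ≤ w x := fun x => (hw_pos x).le
  have integrable_of_integral_pos : ∀ k : α → ℝ, Measurable k → (∀ x, 0 ≤ k x) →
      0 < ∫ x, k x ∂μ → Integrable (fun t => k (σ t) * J t) ν := fun k hk hk0 hpos => by
    by_contra hni
    rw [hcov k hk hk0, integral_undef hni] at hpos
    exact lt_irrefl _ hpos
  have hw_integral_pos : 0 < ∫ x, w x ∂μ :=
    (integral_pos_iff_support_of_nonneg hw0 hw_int).2 <| by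
      rw [Function.support_eq_univ fun x => (hw_pos x).ne']
      exact Measure.measure_univ_pos.2 (NeZero.ne μ)
  have hhw_integral_pos : 0 < ∫ x, h x + w x ∂μ := by
    rw [integral_add hhi hw_int]
    linarith [integral_nonneg (μ := μ) (f := h) hh0]
  -- `h ∘ σ * J = (h + w) ∘ σ * J - w ∘ σ * J`, where both integrals on the right are positive,
  -- hence not junk values
  have hhσJ : Integrable (fun t => h (σ t) * J t) ν :=
    ((integrable_of_integral_pos _ (hh.add hw_meas) (fun x => add_nonneg (hh0 x) (hw0 x))
      hhw_integral_pos).sub (integrable_of_integral_pos w hw_meas hw0 hw_integral_pos)).congr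
      (ae_of_all _ fun t => by simp only [Pi.sub_apply, Pi.add_apply]; ring)
  rw [← ofReal_integral_eq_lintegral_ofReal hhi (ae_of_all _ hh0),
    ← ofReal_integral_eq_lintegral_ofReal hhσJ (ae_of_all _ fun t => mul_nonneg (hh0 _) (hJ t)),
    hcov h hh hh0]

theorem lintegral_ofReal_eq_of_integral_eq (hJ : ∀ t, 0 ≤ J t)
    (hcov : ∀ h : α → ℝ, Measurable h → (∀ x, 0 ≤ h x) → ∫ x, h x ∂μ = ∫ t, h (σ t) * J t ∂ν)
    {h : α → ℝ} (hh : Measurable h) (hh0 : ∀ x, 0 ≤ h x) :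
    ∫⁻ x, ENNReal.ofReal (h x) ∂μ = ∫⁻ t, ENNReal.ofReal (h (σ t) * J t) ∂ν := by
  obtain ⟨w, hw_meas, hw_int, hw_pos⟩ := exists_integrable_pos_of_sigmaFinite μ
  have hw0 : ∀ x, 0 ≤ w x := fun x => (hw_pos x).le
  set hn : ℕ → α → ℝ := fun n x => min (h x) (n * w x)
  have hn_meas : ∀ n, Measurable (hn n) := fun n => hh.min (hw_meas.const_mul n)
  have hn0 : ∀ n x, 0 ≤ hn n x := fun n x => le_min (hh0 x) (mul_nonneg n.cast_nonneg (hw0 x))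
  have hn_int : ∀ n, Integrable (hn n) μ := fun n =>
    (hw_int.const_mul n).mono' (hn_meas n).aestronglyMeasurable (ae_of_all _ fun x => by
      rw [Real.norm_of_nonneg (hn0 n x)]
      exact min_le_right _ _)
  refine le_antisymm ?_ ?_
  · calc ∫⁻ x, ENNReal.ofReal (h x) ∂μ = ∫⁻ x, ⨆ n : ℕ, ENNReal.ofReal (hn n x) ∂μ := by
          simp_rw [hn, ENNReal.iSup_ofReal_min_nat_mul (hw_pos _)]
      _ = ⨆ n : ℕ, ∫⁻ x, ENNReal.ofReal (hn n x) ∂μ :=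
          lintegral_iSup (fun n => (hn_meas n).ennreal_ofReal) fun m n hmn x =>
            ENNReal.ofReal_le_ofReal (min_le_min_left _ (by gcongr; exact hw0 x))
      _ ≤ ∫⁻ t, ENNReal.ofReal (h (σ t) * J t) ∂ν := iSup_le fun n => by
          rw [lintegral_ofReal_eq_of_integrable_of_integral_eq hJ hcov (hn_meas n) (hn0 n)
            (hn_int n)]
          exact lintegral_mono fun t => ENNReal.ofReal_le_ofReal
            (mul_le_mul_of_nonneg_right (min_le_left _ _) (hJ t))
  · by_cases hfin : ∫⁻ x, ENNReal.ofReal (h x) ∂μ = ⊤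
    · exact hfin ▸ le_top
    · refine (lintegral_ofReal_eq_of_integrable_of_integral_eq hJ hcov hh hh0 ?_).ge
      exact ⟨hh.aestronglyMeasurable,
        (hasFiniteIntegral_iff_ofReal (ae_of_all _ hh0)).2 (lt_top_iff_ne_top.2 hfin)⟩

theorem lintegral_prod_ofReal_eq_of_integral_eq {Θ : Type*} [MeasurableSpace Θ] {ρ : Measure Θ}
    [SFinite ρ] [SFinite ν] {σ : Θ → β → α} {J : Θ → β → ℝ} (hJ : ∀ θ t, 0 ≤ J θ t)
    (hcov : ∀ θ (h : α → ℝ), Measurable h → (∀ x, 0 ≤ h x) →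
      ∫ x, h x ∂μ = ∫ t, h (σ θ t) * J θ t ∂ν)
    {F : Θ × α → ℝ} (hF : Measurable F) (hF0 : ∀ q, 0 ≤ F q)
    {G : Θ → β → ℝ} (hG : Measurable (Function.uncurry G))
    (hFG : ∀ θ t, F (θ, σ θ t) * J θ t = G θ t) :
    ∫⁻ q, ENNReal.ofReal (F q) ∂ρ.prod μ = ∫⁻ t, ∫⁻ θ, ENNReal.ofReal (G θ t) ∂ρ ∂ν := by
  rw [lintegral_prod _ hF.ennreal_ofReal.aemeasurable]
  refine (lintegral_congr fun θ => ?_).trans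
    (lintegral_lintegral_swap hG.ennreal_ofReal.aemeasurable)
  rw [lintegral_ofReal_eq_of_integral_eq (h := fun x => F (θ, x)) (hJ θ) (hcov θ)
    (hF.comp measurable_prodMk_left) fun x => hF0 _]
  simp_rw [hFG]

end ChangeOfVariables

end MeasureTheory

theorem indicator_pivot_mul_jacobian {p d : ℕ}
    {T sInv : (Fin p → ℝ) → (Fin d → ℝ) → (Fin d → ℝ)} {J fn : (Fin p → ℝ) → (Fin d → ℝ) → ℝ}
    {rn : (Fin p → ℝ) → ℝ} {K g : (Fin d → ℝ) → ℝ} {sobs : Fin d → ℝ}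
    (hInv₁ : ∀ θ t, T θ (sInv θ t) = t) (hJac : ∀ θ t, fn θ (sInv θ t) * J θ t = g t)
    (A : Set (Fin d → ℝ)) (θ : Fin p → ℝ) (t : Fin d → ℝ) :
    ({q : (Fin p → ℝ) × (Fin d → ℝ) | T q.1 q.2 ∈ A}).indicator
        (fun q => rn q.1 * fn q.1 q.2 * K (q.2 - sobs)) (θ, sInv θ t) * J θ t =
      A.indicator g t * (rn θ * K (sInv θ t - sobs)) := by
  have hmem : (θ, sInv θ t) ∈ {q : (Fin p → ℝ) × (Fin d → ℝ) | T q.1 q.2 ∈ A} ↔ t ∈ A := by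
    show T θ (sInv θ t) ∈ A ↔ t ∈ A
    rw [hInv₁]
  by_cases ht : t ∈ A
  · rw [indicator_of_mem (hmem.2 ht), indicator_of_mem ht, ← hJac θ t]
    ring
  · rw [indicator_of_notMem (mt hmem.1 ht), indicator_of_notMem ht, zero_mul, zero_mul]

theorem exact_pivot_matching_general
    {p d : ℕ}
    (T : (Fin p → ℝ) → (Fin d → ℝ) → (Fin d → ℝ))
    (sInv : (Fin p → ℝ) → (Fin d → ℝ) → (Fin d → ℝ))
    (J : (Fin p → ℝ) → (Fin d → ℝ) → ℝ)
    (fn : (Fin p → ℝ) → (Fin d → ℝ) → ℝ)   -- `fn θ s = f_n(s | θ)`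
    (rn : (Fin p → ℝ) → ℝ) (K : (Fin d → ℝ) → ℝ)
    (g : (Fin d → ℝ) → ℝ)
    (sobs : Fin d → ℝ) (C : ℝ)
    (hT_meas : Measurable fun q : (Fin p → ℝ) × (Fin d → ℝ) => T q.1 q.2)
    (hsInv_meas : Measurable fun q : (Fin p → ℝ) × (Fin d → ℝ) => sInv q.1 q.2)
    (hJ_nonneg : ∀ θ t, 0 ≤ J θ t)
    (hfn_nonneg : ∀ θ s, 0 ≤ fn θ s) (hfn_meas : Measurable fun q : _ × _ => fn q.1 q.2)
    (hrn_nonneg : ∀ θ, 0 ≤ rn θ) (hrn_meas : Measurable rn)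
    (hK_nonneg : ∀ u, 0 ≤ K u) (hK_meas : Measurable K)
    (hg_nonneg : ∀ t, 0 ≤ g t) (hg_meas : Measurable g)
    -- `sInv θ` is the inverse of `T θ`
    (hInv₁ : ∀ θ t, T θ (sInv θ t) = t)
    -- change of variables for `s ↦ T θ s` with Jacobian factor `J`
    (hCOV : ∀ (θ : Fin p → ℝ) (h : (Fin d → ℝ) → ℝ), Measurable h → (∀ s, 0 ≤ h s) →
      (∫ s, h s) = ∫ t, h (sInv θ t) * J θ t)
    -- the pivot density relation: `f_n(s_{t,θ}|θ) |∂ₛT|⁻¹ = g(t)`, `g` free of `θ`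
    (hJac : ∀ θ t, fn θ (sInv θ t) * J θ t = g t)
    -- requirement (8): the normalizing integral is a constant free of `t`
    (hC : ∀ t, (∫ θ, rn θ * K (sInv θ t - sobs)) = C) :
    ∀ A : Set (Fin d → ℝ), MeasurableSet A →
      (∫ q : (Fin p → ℝ) × (Fin d → ℝ),
          ({q : (Fin p → ℝ) × (Fin d → ℝ) | T q.1 q.2 ∈ A}).indicator
            (fun q => rn q.1 * fn q.1 q.2 * K (q.2 - sobs)) q)
        = C * ∫ t in A, g t := by
  intro A hA
  have hF_meas : Measurable (({q : (Fin p → ℝ) × (Fin d → ℝ) | T q.1 q.2 ∈ A}).indicator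
      fun q => rn q.1 * fn q.1 q.2 * K (q.2 - sobs)) :=
    (((hrn_meas.comp measurable_fst).mul hfn_meas).mul
      (hK_meas.comp (measurable_snd.sub_const sobs))).indicator (hT_meas hA)
  have hF0 : ∀ q, 0 ≤ ({q : (Fin p → ℝ) × (Fin d → ℝ) | T q.1 q.2 ∈ A}).indicator
      (fun q => rn q.1 * fn q.1 q.2 * K (q.2 - sobs)) q := indicator_nonneg fun q _ =>
    mul_nonneg (mul_nonneg (hrn_nonneg _) (hfn_nonneg _ _)) (hK_nonneg _)
  have hAg0 : ∀ t, 0 ≤ A.indicator g t := indicator_nonneg fun t _ => hg_nonneg t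
  have hnormalizer : ∀ t, (∫⁻ θ, ENNReal.ofReal (rn θ * K (sInv θ t - sobs))).toReal = C := by
    intro t
    have hmeas : Measurable fun θ => rn θ * K (sInv θ t - sobs) :=
      hrn_meas.mul (hK_meas.comp ((hsInv_meas.comp measurable_prodMk_right).sub_const sobs))
    rw [← hC t, integral_eq_lintegral_of_nonneg_ae
      (ae_of_all _ fun θ => mul_nonneg (hrn_nonneg θ) (hK_nonneg _)) hmeas.aestronglyMeasurable]
  rw [integral_eq_lintegral_of_nonneg_ae (ae_of_all _ hF0) hF_meas.aestronglyMeasurable,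
    Measure.volume_eq_prod, lintegral_prod_ofReal_eq_of_integral_eq hJ_nonneg hCOV hF_meas hF0
      (G := fun θ t => A.indicator g t * (rn θ * K (sInv θ t - sobs)))
      (((hg_meas.indicator hA).comp measurable_snd).mul ((hrn_meas.comp measurable_fst).mul
        (hK_meas.comp (hsInv_meas.sub_const sobs))))
      (indicator_pivot_mul_jacobian hInv₁ hJac A)]
  simp_rw [ENNReal.ofReal_mul (hAg0 _), lintegral_const_mul' _ _ ENNReal.ofReal_ne_top]
  rw [toReal_lintegral_mul_of_toReal_eq (hnormalizer 0 ▸ ENNReal.toReal_nonneg) hnormalizer,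
    ← integral_indicator hA, integral_eq_lintegral_of_nonneg_ae (ae_of_all _ hAg0)
      (hg_meas.indicator hA).aestronglyMeasurable]

/-- Theorem 1 (exact-pivot version). Let `T : Θ × S → ℝ^d` be a pivot: for each `θ`,
`s ↦ T θ s` is a diffeomorphism with inverse `t ↦ sInv θ t` and Jacobian factor `J θ t`
(expressed through the change-of-variables hypothesis `hCOV`), and the density
transformation `f_n(s_{t,θ}|θ) · J(θ,t) = g(t)` holds with `g` free of `θ`.  If the
normalizing integral `∫ r_n(θ) K(s_{t,θ} − s_obs) dθ = C` is free of `t`, then the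
(unnormalized) accept–reject mass of the event `{T(θ', s') ∈ A}` equals `C ∫_A g`:
the Monte-Carlo law of the pivot given `S_n = s_obs` is exactly its sampling law `g`. -/
theorem exact_pivot_matching
    {p d : ℕ}
    (T : (Fin p → ℝ) → (Fin d → ℝ) → (Fin d → ℝ))
    (sInv : (Fin p → ℝ) → (Fin d → ℝ) → (Fin d → ℝ))
    (J : (Fin p → ℝ) → (Fin d → ℝ) → ℝ)
    (fn : (Fin p → ℝ) → (Fin d → ℝ) → ℝ)   -- `fn θ s = f_n(s | θ)`
    (rn : (Fin p → ℝ) → ℝ) (K : (Fin d → ℝ) → ℝ)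
    (g : (Fin d → ℝ) → ℝ)
    (sobs : Fin d → ℝ) (C : ℝ)
    (hT_meas : Measurable fun q : (Fin p → ℝ) × (Fin d → ℝ) => T q.1 q.2)
    (hsInv_meas : Measurable fun q : (Fin p → ℝ) × (Fin d → ℝ) => sInv q.1 q.2)
    (hJ_nonneg : ∀ θ t, 0 ≤ J θ t)
    (hfn_nonneg : ∀ θ s, 0 ≤ fn θ s) (hfn_meas : Measurable fun q : _ × _ => fn q.1 q.2)
    (hrn_nonneg : ∀ θ, 0 ≤ rn θ) (hrn_meas : Measurable rn)
    (hK_nonneg : ∀ u, 0 ≤ K u) (hK_meas : Measurable K)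
    (hg_nonneg : ∀ t, 0 ≤ g t) (hg_meas : Measurable g)
    -- `sInv θ` is the inverse of `T θ`
    (hInv₁ : ∀ θ t, T θ (sInv θ t) = t)
    (hInv₂ : ∀ θ s, sInv θ (T θ s) = s)
    -- change of variables for `s ↦ T θ s` with Jacobian factor `J`
    (hCOV : ∀ (θ : Fin p → ℝ) (h : (Fin d → ℝ) → ℝ), Measurable h → (∀ s, 0 ≤ h s) →
      (∫ s, h s) = ∫ t, h (sInv θ t) * J θ t)
    -- the pivot density relation: `f_n(s_{t,θ}|θ) |∂ₛT|⁻¹ = g(t)`, `g` free of `θ`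
    (hJac : ∀ θ t, fn θ (sInv θ t) * J θ t = g t)
    -- requirement (8): the normalizing integral is a constant free of `t`
    (hC : ∀ t, (∫ θ, rn θ * K (sInv θ t - sobs)) = C) :
    ∀ A : Set (Fin d → ℝ), MeasurableSet A →
      (∫ q : (Fin p → ℝ) × (Fin d → ℝ),
          ({q : (Fin p → ℝ) × (Fin d → ℝ) | T q.1 q.2 ∈ A}).indicator
            (fun q => rn q.1 * fn q.1 q.2 * K (q.2 - sobs)) q)
        = C * ∫ t in A, g t :=
  exact_pivot_matching_general T sInv J fn rn K g sobs C hT_meas hsInv_meas hJ_nonneg hfn_nonneg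
    hfn_meas hrn_nonneg hrn_meas hK_nonneg hK_meas hg_nonneg hg_meas hInv₁ hCOV hJac hC
end
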